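/- arXiv:1604.07540 — 2 statements merged into one kernel-verified Lean document; each statement's English description precedes it below -/
import Mathlib

section
/- If an impossibility holds for n = 3 (no rule on 3 agents and 3 objects extends PS while being ex post efficient and weakly SD-strategyproof), then for every n > 3 there is also no rule on n agents and n objects extending PS that is ex post efficient and weakly SD-strategyproof. -/
open Finset
open scoped Classical

/-- A weak preference relation: complete (total) and transitive. -/
def IsPref {O : Type*} (R : O → O → Prop) : Prop :=
  Total R ∧ Transitive R

/-- A strict preference: a complete transitive relation that is antisymmetric
(no indifference between distinct objects). -/
def IsStrictPref {O : Type*} (R : O → O → Prop) : Prop :=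
  IsPref R ∧ ∀ a b, R a b → R b a → a = b

/-- A random assignment: a doubly stochastic `n × n` matrix. -/
def IsRandomAssignment {n : ℕ} (p : Fin n → Fin n → ℝ) : Prop :=
  (∀ i o, 0 ≤ p i o) ∧ (∀ i, ∑ o, p i o = 1) ∧ (∀ o, ∑ i, p i o = 1)

/-- An allocation: a probability vector over objects. -/
def IsAlloc {O : Type*} [Fintype O] (x : O → ℝ) : Prop :=
  (∀ o, 0 ≤ x o) ∧ ∑ o, x o = 1

/-- `x` weakly stochastically dominates `y` w.r.t. the weak preference `R`. -/
def SDge {O : Type*} [Fintype O] (R : O → O → Prop) (x y : O → ℝ) : Prop :=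
  ∀ o : O, ∑ o' ∈ univ.filter (fun o' => R o' o), y o' ≤
    ∑ o' ∈ univ.filter (fun o' => R o' o), x o'

/-- Strict stochastic dominance. -/
def SDgt {O : Type*} [Fintype O] (R : O → O → Prop) (x y : O → ℝ) : Prop :=
  SDge R x y ∧ ¬ SDge R y x

/-- A trading cycle of size `k` for the assignment `p` under the preference profile `R`:
agents `i 0, …, i (k-1)` and objects `o 0, …, o (k-1)` such that each agent `i j` owns a
positive fraction of `o j`, weakly prefers the next object `o (j+1 mod k)` to `o j`, and
some agent strictly prefers the next object. -/
def IsTradingCycle {n k : ℕ} (R : Fin n → Fin n → Fin n → Prop)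
    (p : Fin n → Fin n → ℝ) (i : Fin k → Fin n) (o : Fin k → Fin n) : Prop :=
  0 < k ∧ (∀ j, 0 < p (i j) (o j)) ∧ (∀ j, R (i j) (o (finRotate k j)) (o j)) ∧
    (∃ j, ¬ R (i j) (o j) (o (finRotate k j)))

def AdmitsTradingCycle {n : ℕ} (R : Fin n → Fin n → Fin n → Prop)
    (p : Fin n → Fin n → ℝ) : Prop :=
  ∃ (k : ℕ) (i : Fin k → Fin n) (o : Fin k → Fin n), IsTradingCycle R p i o

/-- SD-efficiency: no random assignment SD-dominates `p` for all agents, strictly for some. -/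
def SDEfficient {n : ℕ} (R : Fin n → Fin n → Fin n → Prop) (p : Fin n → Fin n → ℝ) : Prop :=
  ¬ ∃ q, IsRandomAssignment q ∧ (∀ i, SDge (R i) (q i) (p i)) ∧ ∃ i, SDgt (R i) (q i) (p i)

/-- The discrete (0-1) assignment associated with a permutation: agent `i` gets object `σ i`. -/
def permMatrix {n : ℕ} (σ : Equiv.Perm (Fin n)) : Fin n → Fin n → ℝ :=
  fun i o => if σ i = o then 1 else 0

/-- Pareto optimality of a discrete assignment. -/
def ParetoOptimalPerm {n : ℕ} (R : Fin n → Fin n → Fin n → Prop)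
    (σ : Equiv.Perm (Fin n)) : Prop :=
  ¬ ∃ τ : Equiv.Perm (Fin n), (∀ i, R i (τ i) (σ i)) ∧ ∃ i, ¬ R i (σ i) (τ i)

/-- Ex post efficiency: `p` is a convex combination of Pareto optimal discrete assignments. -/
def ExPostEfficient {n : ℕ} (R : Fin n → Fin n → Fin n → Prop)
    (p : Fin n → Fin n → ℝ) : Prop :=
  ∃ w : Equiv.Perm (Fin n) → ℝ, (∀ σ, 0 ≤ w σ) ∧ (∑ σ, w σ) = 1 ∧
    (∀ σ, w σ ≠ 0 → ParetoOptimalPerm R σ) ∧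
    ∀ i o, p i o = ∑ σ, w σ * permMatrix σ i o

/-- One run of the simultaneous-eating algorithm, with `fuel` remaining steps.
At each step every agent eats her most preferred remaining object (w.r.t. her weak
preference `R i`) at unit speed until some object is exhausted. -/
noncomputable def PSaux {n : ℕ} (R : Fin n → Fin n → Fin n → Prop) :
    ℕ → (Fin n → ℝ) → (Fin n → Fin n → ℝ) → (Fin n → Fin n → ℝ)
  | 0, _, alloc => alloc
  | fuel + 1, rem, alloc =>
    let A : Finset (Fin n) := univ.filter fun o => 0 < rem o
    if hA : A.Nonempty then
      let fav : Fin n → Fin n := fun i =>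
        if h : ∃ o ∈ A, ∀ o' ∈ A, R i o o' then h.choose else hA.choose
      let eaters : Fin n → Finset (Fin n) := fun o => univ.filter fun i => fav i = o
      let E : Finset (Fin n) := A.filter fun o => (eaters o).Nonempty
      if hE : E.Nonempty then
        let t : ℝ := (E.image fun o => rem o / (eaters o).card).min' (hE.image _)
        PSaux R fuel (fun o => if o ∈ E then rem o - t * (eaters o).card else rem o)
          (fun i o => alloc i o + if fav i = o then t else 0)
      else alloc
    else alloc

/-- The probabilistic serial rule (defined via the simultaneous eating algorithm;
for strict preference profiles this is the PS rule of Bogomolnaia and Moulin). -/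
noncomputable def PS {n : ℕ} (R : Fin n → Fin n → Fin n → Prop) : Fin n → Fin n → ℝ :=
  PSaux R n (fun _ => 1) (fun _ _ => 0)

/-- `f` extends PS: it coincides with PS on every strict preference profile. -/
def ExtendsPS {n : ℕ}
    (f : (Fin n → Fin n → Fin n → Prop) → Fin n → Fin n → ℝ) : Prop :=
  ∀ R, (∀ i, IsStrictPref (R i)) → f R = PS R

/-- `f` is weakly SD-strategyproof: no agent's misreport yields an allocation strictly
SD-dominating her truthful allocation w.r.t. her true preferences. -/
def WeakSDStrategyproof {n : ℕ}
    (f : (Fin n → Fin n → Fin n → Prop) → Fin n → Fin n → ℝ) : Prop :=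
  ∀ R, (∀ i, IsPref (R i)) → ∀ (i : Fin n) (R' : Fin n → Fin n → Prop), IsPref R' →
    ¬ SDgt (R i) (f (Function.update R i R') i) (f R i)

/-- `f` is ex post efficient (as a rule). -/
def ExPostEfficientRule {n : ℕ}
    (f : (Fin n → Fin n → Fin n → Prop) → Fin n → Fin n → ℝ) : Prop :=
  ∀ R, (∀ i, IsPref (R i)) → ExPostEfficient R (f R)

/-- The weak preference on `Fin 3` induced by a rank vector (lower rank = better). -/
def ofRank (r : Fin 3 → ℕ) : Fin 3 → Fin 3 → Prop := fun x y => r x ≤ r y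

/-- Objects `a, b, c` are `0, 1, 2`. -/
def Pabc : Fin 3 → Fin 3 → Prop := ofRank ![0, 1, 2]
def Pacb : Fin 3 → Fin 3 → Prop := ofRank ![0, 2, 1]
def Pbca : Fin 3 → Fin 3 → Prop := ofRank ![2, 0, 1]
def PabIndiff_c : Fin 3 → Fin 3 → Prop := ofRank ![0, 0, 1]


section stmt17aux
variable {n : ℕ}

lemma prefRefl {O : Type*} {R : O → O → Prop} (hR : IsPref R) (a : O) : R a a := by
  rcases hR.1 a a with h | h <;> exact h

lemma exists_max {O : Type*} {R : O → O → Prop} (hR : IsPref R)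
    (A : Finset O) (hA : A.Nonempty) : ∃ o ∈ A, ∀ o' ∈ A, R o o' := by
  classical
  induction A using Finset.induction_on with
  | empty => exact absurd hA (by simp)
  | @insert a s ha ih =>
    by_cases hs : s.Nonempty
    · obtain ⟨m, hm, hmax⟩ := ih hs
      rcases hR.1 m a with h | h
      · refine ⟨m, mem_insert_of_mem hm, ?_⟩
        intro o' ho'
        rcases mem_insert.mp ho' with rfl | ho'
        · exact h
        · exact hmax _ ho'
      · refine ⟨a, mem_insert_self _ _, ?_⟩
        intro o' ho'
        rcases mem_insert.mp ho' with rfl | ho'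
        · exact prefRefl hR _
        · exact hR.2 h (hmax _ ho')
    · rw [Finset.not_nonempty_iff_eq_empty] at hs
      subst hs
      refine ⟨a, mem_insert_self _ _, ?_⟩
      intro o' ho'
      rcases mem_insert.mp ho' with rfl | ho'
      · exact prefRefl hR _
      · simp at ho'

lemma choose_max_eq {O : Type*} {R : O → O → Prop} (hR : IsStrictPref R) {A : Finset O}
    (h : ∃ o ∈ A, ∀ o' ∈ A, R o o') {m : O} (hm : m ∈ A) (hmax : ∀ o' ∈ A, R m o') :
    h.choose = m := by
  obtain ⟨hc, hcm⟩ := h.choose_spec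
  exact hR.2 _ _ (hcm m hm) (hmax _ hc)

noncomputable def Aset (rem : Fin n → ℝ) : Finset (Fin n) := univ.filter fun o => 0 < rem o
noncomputable def eatersF (fav : Fin n → Fin n) (o : Fin n) : Finset (Fin n) :=
  univ.filter fun i => fav i = o
noncomputable def Eset (rem : Fin n → ℝ) (fav : Fin n → Fin n) : Finset (Fin n) :=
  (Aset rem).filter fun o => (eatersF fav o).Nonempty
noncomputable def tVal (rem : Fin n → ℝ) (fav : Fin n → Fin n) (hE : (Eset rem fav).Nonempty) : ℝ :=
  ((Eset rem fav).image fun o => rem o / (eatersF fav o).card).min' (hE.image _)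

lemma tVal_mem (rem : Fin n → ℝ) (fav : Fin n → Fin n) (hE : (Eset rem fav).Nonempty) :
    ∃ o ∈ Eset rem fav, rem o / ((eatersF fav o).card : ℝ) = tVal rem fav hE :=
  Finset.mem_image.mp (Finset.min'_mem _ (hE.image _))

lemma tVal_le (rem : Fin n → ℝ) (fav : Fin n → Fin n) (hE : (Eset rem fav).Nonempty)
    {o : Fin n} (ho : o ∈ Eset rem fav) :
    tVal rem fav hE ≤ rem o / ((eatersF fav o).card : ℝ) :=
  Finset.min'_le _ _ (Finset.mem_image_of_mem _ ho)

lemma PSaux_succ_eq (R : Fin n → Fin n → Fin n → Prop) (hstrict : ∀ i, IsStrictPref (R i))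
    (fuel : ℕ) (rem : Fin n → ℝ) (alloc : Fin n → Fin n → ℝ)
    (hA : (Aset rem).Nonempty) (fav : Fin n → Fin n)
    (hfavmem : ∀ i, fav i ∈ Aset rem)
    (hfavmax : ∀ i, ∀ o' ∈ Aset rem, R i (fav i) o')
    (hE : (Eset rem fav).Nonempty) :
    PSaux R (fuel+1) rem alloc = PSaux R fuel
      (fun o => if o ∈ Eset rem fav then rem o - tVal rem fav hE * (eatersF fav o).card else rem o)
      (fun i o => alloc i o + if fav i = o then tVal rem fav hE else 0) := by
  have h0 : PSaux R (fuel+1) rem alloc =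
      if hA : (Aset rem).Nonempty then
        (fun (fv : Fin n → Fin n) =>
          if hE : (Eset rem fv).Nonempty then
            PSaux R fuel (fun o => if o ∈ Eset rem fv then rem o - tVal rem fv hE * (eatersF fv o).card else rem o)
              (fun i o => alloc i o + if fv i = o then tVal rem fv hE else 0)
          else alloc)
        (fun i => if h : ∃ o ∈ Aset rem, ∀ o' ∈ Aset rem, R i o o' then h.choose else hA.choose)
      else alloc := rfl
  rw [h0, dif_pos hA]
  have hfx : (fun i => if h : ∃ o ∈ Aset rem, ∀ o' ∈ Aset rem, R i o o' then h.choose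
      else hA.choose) = fav := by
    funext i
    rw [dif_pos ⟨fav i, hfavmem i, hfavmax i⟩]
    exact choose_max_eq (hstrict i) _ (hfavmem i) (hfavmax i)
  rw [hfx]
  exact dif_pos hE

lemma PSaux_stall (R : Fin n → Fin n → Fin n → Prop) (fuel : ℕ) (rem : Fin n → ℝ)
    (alloc : Fin n → Fin n → ℝ) (hA : ¬ (Aset rem).Nonempty) :
    PSaux R fuel rem alloc = alloc := by
  cases fuel with
  | zero => rfl
  | succ fuel =>
    have h0 : PSaux R (fuel+1) rem alloc =
        if hA : (Aset rem).Nonempty then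
          (fun (fv : Fin n → Fin n) =>
            if hE : (Eset rem fv).Nonempty then
              PSaux R fuel (fun o => if o ∈ Eset rem fv then rem o - tVal rem fv hE * (eatersF fv o).card else rem o)
                (fun i o => alloc i o + if fv i = o then tVal rem fv hE else 0)
            else alloc)
          (fun i => if h : ∃ o ∈ Aset rem, ∀ o' ∈ Aset rem, R i o o' then h.choose else hA.choose)
        else alloc := rfl
    rw [h0, dif_neg hA]


def Pold (R : Fin 3 → Fin 3 → Prop) : Fin n → Fin n → Prop :=
  fun x y =>
    if hx : x.val < 3 then
      (if hy : y.val < 3 then R ⟨x.val, hx⟩ ⟨y.val, hy⟩ else True)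
    else (if y.val < 3 then False else x ≤ y)

def Pnew (j : Fin n) : Fin n → Fin n → Prop :=
  fun x y => (if x = j then 0 else x.val + 1) ≤ (if y = j then 0 else y.val + 1)

def padP (R : Fin 3 → Fin 3 → Fin 3 → Prop) : Fin n → Fin n → Fin n → Prop :=
  fun i => if h : i.val < 3 then Pold (R ⟨i.val, h⟩) else Pnew i

lemma pold_iff (hn : 3 ≤ n) (R : Fin 3 → Fin 3 → Prop) (x y : Fin 3) :
    Pold (n := n) R (Fin.castLE hn x) (Fin.castLE hn y) ↔ R x y := by
  unfold Pold
  rw [dif_pos (show (Fin.castLE hn x).val < 3 from x.isLt),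
    dif_pos (show (Fin.castLE hn y).val < 3 from y.isLt)]
  exact Iff.rfl

lemma pold_old_new (R : Fin 3 → Fin 3 → Prop) {x y : Fin n} (hx : x.val < 3) (hy : 3 ≤ y.val) :
    Pold R x y := by
  unfold Pold
  rw [dif_pos hx, dif_neg (by omega)]
  trivial

lemma pold_not_new_old (R : Fin 3 → Fin 3 → Prop) {x y : Fin n} (hx : 3 ≤ x.val) (hy : y.val < 3) :
    ¬ Pold R x y := by
  unfold Pold
  rw [dif_neg (by omega), if_pos hy]
  exact id

lemma pold_new_new (R : Fin 3 → Fin 3 → Prop) {x y : Fin n} (hx : 3 ≤ x.val) (hy : 3 ≤ y.val) :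
    Pold R x y ↔ x ≤ y := by
  unfold Pold
  rw [dif_neg (by omega), if_neg (by omega)]

lemma isPref_pold (R : Fin 3 → Fin 3 → Prop) (hR : IsPref R) : IsPref (Pold (n := n) R) := by
  constructor
  · intro x y
    unfold Pold
    split_ifs <;> first | exact hR.1 _ _ | simp | exact le_total x y
  · intro x y z hxy hyz
    unfold Pold at hxy hyz ⊢
    split_ifs at hxy hyz ⊢ <;>
      first
      | trivial
      | exact hxy.elim
      | exact hyz.elim
      | exact hR.2 hxy hyz
      | exact le_trans hxy hyz

lemma isStrictPref_pold (R : Fin 3 → Fin 3 → Prop) (hR : IsStrictPref R) :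
    IsStrictPref (Pold (n := n) R) := by
  refine ⟨isPref_pold R hR.1, ?_⟩
  intro a b hab hba
  unfold Pold at hab hba
  split_ifs at hab hba <;>
    first
    | exact hab.elim
    | exact hba.elim
    | exact le_antisymm hab hba
    | (have h2 := congrArg Fin.val (hR.2 _ _ hab hba)
       exact Fin.ext h2)

lemma isStrictPref_pnew (j : Fin n) : IsStrictPref (Pnew j) := by
  refine ⟨⟨fun x y => le_total _ _, fun x y z hxy hyz => le_trans hxy hyz⟩, ?_⟩
  intro a b hab hba
  have h := le_antisymm hab hba
  by_cases ha : a = j <;> by_cases hb : b = j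
  · rw [ha, hb]
  · simp [ha, hb] at h
  · simp [ha, hb] at h
  · simp only [if_neg ha, if_neg hb] at h
    exact Fin.ext (by omega)

lemma pnew_top (j : Fin n) (y : Fin n) : Pnew j j y := by
  simp only [Pnew, if_pos rfl]
  exact Nat.zero_le _

lemma pnew_top_unique (j : Fin n) {y : Fin n} (h : Pnew j y j) : y = j := by
  by_contra hy
  have h' : y.val + 1 ≤ 0 := by simpa [Pnew, hy] using h
  omega

lemma pnew_other (j : Fin n) {x y : Fin n} (hx : x ≠ j) (hy : y ≠ j) :
    Pnew j x y ↔ x.val ≤ y.val := by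
  simp only [Pnew, if_neg hx, if_neg hy]
  omega

lemma padP_old (hn : 3 ≤ n) (R : Fin 3 → Fin 3 → Fin 3 → Prop) (i : Fin 3) :
    padP (n := n) R (Fin.castLE hn i) = Pold (R i) := by
  unfold padP
  rw [dif_pos (show (Fin.castLE hn i).val < 3 from i.isLt)]
  rfl

lemma padP_new (R : Fin 3 → Fin 3 → Fin 3 → Prop) {j : Fin n} (hj : 3 ≤ j.val) :
    padP R j = Pnew j := by
  unfold padP
  rw [dif_neg (by omega)]

lemma isPref_padP (R : Fin 3 → Fin 3 → Fin 3 → Prop) (hR : ∀ i, IsPref (R i)) (i : Fin n) :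
    IsPref (padP R i) := by
  unfold padP
  split
  · exact isPref_pold _ (hR _)
  · exact (isStrictPref_pnew i).1

lemma isStrictPref_padP (R : Fin 3 → Fin 3 → Fin 3 → Prop) (hR : ∀ i, IsStrictPref (R i))
    (i : Fin n) : IsStrictPref (padP R i) := by
  unfold padP
  split
  · exact isStrictPref_pold _ (hR _)
  · exact isStrictPref_pnew i

lemma filter_small (hn : 3 ≤ n) (P : Fin n → Prop) [DecidablePred P] (hP : ∀ x, P x → x.val < 3) :
    univ.filter P = (univ.filter fun z : Fin 3 => P (Fin.castLE hn z)).map (Fin.castLEEmb hn) := by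
  ext x
  simp only [mem_filter, mem_univ, true_and, mem_map, Fin.castLEEmb_apply]
  constructor
  · intro hx
    refine ⟨⟨x.val, hP x hx⟩, ?_, ?_⟩
    · exact hx
    · exact Fin.ext rfl
  · rintro ⟨z, hz, rfl⟩
    simpa only [mem_filter, mem_univ, true_and] using hz

lemma sum_small (hn : 3 ≤ n) (g : Fin n → ℝ) (hg : ∀ x : Fin n, 3 ≤ x.val → g x = 0) :
    ∑ x, g x = ∑ z : Fin 3, g (Fin.castLE hn z) := by
  have h1 : ∑ x ∈ univ.filter (fun x : Fin n => x.val < 3), g x = ∑ x, g x := by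
    apply Finset.sum_filter_of_ne
    intro x _ hx
    by_contra h
    exact hx (hg x (not_lt.mp h))
  rw [← h1, filter_small hn (fun x : Fin n => x.val < 3) (fun x h => h), Finset.sum_map]
  try simp only [Fin.castLEEmb_apply]
  have h2 : (univ.filter (fun z : Fin 3 => (Fin.castLE hn z).val < 3)) = univ :=
    Finset.filter_true_of_mem (fun z _ => z.isLt)
  rw [h2]

lemma sum_filter_small (hn : 3 ≤ n) (g : Fin n → ℝ) (hg : ∀ x : Fin n, 3 ≤ x.val → g x = 0)
    (P : Fin n → Prop) :
    ∑ x ∈ univ.filter P, g x =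
      ∑ z ∈ (univ : Finset (Fin 3)).filter (fun z => P (Fin.castLE hn z)), g (Fin.castLE hn z) := by
  rw [Finset.sum_filter, Finset.sum_filter]
  exact sum_small hn _ (fun x hx => by rw [hg x hx]; simp)

lemma padP_old' (R : Fin 3 → Fin 3 → Fin 3 → Prop) {k : Fin n} (hk : k.val < 3) :
    padP R k = Pold (R ⟨k.val, hk⟩) := dif_pos hk

lemma pareto_fix_new (hn : 3 ≤ n) (R : Fin 3 → Fin 3 → Fin 3 → Prop)
    (hR : ∀ i, IsPref (R i))
    (σ : Equiv.Perm (Fin n)) (hσ : ParetoOptimalPerm (padP R) σ) :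
    ∀ j : Fin n, 3 ≤ j.val → σ j = j := by
  by_contra hcon
  push_neg at hcon
  set S : Finset (Fin n) := univ.filter (fun j => 3 ≤ j.val ∧ σ j ≠ j) with hS
  have hSne : S.Nonempty := by
    obtain ⟨j, hj3, hne⟩ := hcon
    exact ⟨j, by simp [hS, hj3, hne]⟩
  set j := S.max' hSne with hjdef
  have hjS : j ∈ S := S.max'_mem hSne
  have hj3 : 3 ≤ j.val := (mem_filter.mp hjS).2.1
  have hjne : σ j ≠ j := (mem_filter.mp hjS).2.2
  have hmaxS : ∀ m : Fin n, j < m → σ m = m := by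
    intro m hm
    by_contra hmm
    have hm3 : 3 ≤ m.val := by
      have := Fin.lt_def.mp hm
      omega
    have : m ∈ S := mem_filter.mpr ⟨mem_univ _, hm3, hmm⟩
    exact absurd (S.le_max' m this) (not_le.mpr hm)
  set k := σ⁻¹ j with hkdef
  have hσk : σ k = j := σ.apply_symm_apply j
  have hkj : k ≠ j := by
    intro h
    rw [h] at hσk
    exact hjne hσk
  set m := σ j with hmdef
  have hmj : m ≠ j := fun h => hjne (hmdef ▸ h)
  have hmcase : m.val < 3 ∨ (3 ≤ m.val ∧ m.val < j.val) := by
    by_cases h3 : m.val < 3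
    · left; exact h3
    · right
      refine ⟨not_lt.mp h3, ?_⟩
      by_contra hge
      have hjm : j < m := by
        have hne : j.val ≠ m.val := fun hh => hmj (Fin.ext hh.symm)
        exact Fin.lt_def.mpr (by omega)
      have h1 : σ m = m := hmaxS m hjm
      exact hmj (σ.injective (h1.trans hmdef))
  have hprefkm : padP R k m j := by
    by_cases hk3 : k.val < 3
    · rw [padP_old' R hk3]
      rcases hmcase with h | h
      · exact pold_old_new _ h hj3
      · rw [pold_new_new _ h.1 hj3]
        exact Fin.le_def.mpr (le_of_lt h.2)
    · rw [padP_new R (not_lt.mp hk3)]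
      by_cases hmk : m = k
      · rw [hmk]; exact pnew_top k j
      · rw [pnew_other k hmk (Ne.symm hkj)]
        rcases hmcase with h | h
        · omega
        · omega
  apply hσ
  refine ⟨σ * Equiv.swap j k, ?_, ⟨j, ?_⟩⟩
  · intro i
    by_cases hij : i = j
    · rw [hij]
      have h1 : (σ * Equiv.swap j k) j = j := by
        simp only [Equiv.Perm.mul_apply, Equiv.swap_apply_left]
        exact hσk
      rw [h1, padP_new R hj3]
      exact pnew_top j (σ j)
    · by_cases hik : i = k
      · rw [hik]
        have h1 : (σ * Equiv.swap j k) k = σ j := by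
          simp only [Equiv.Perm.mul_apply, Equiv.swap_apply_right]
        rw [h1, hσk]
        exact hprefkm
      · have h1 : (σ * Equiv.swap j k) i = σ i := by
          simp only [Equiv.Perm.mul_apply, Equiv.swap_apply_of_ne_of_ne hij hik]
        rw [h1]
        exact prefRefl (isPref_padP R hR i) _
  · have h1 : (σ * Equiv.swap j k) j = j := by
      simp only [Equiv.Perm.mul_apply, Equiv.swap_apply_left]
      exact hσk
    rw [h1, padP_new R hj3]
    intro hcon2
    exact hmj (pnew_top_unique j hcon2)

lemma sigma_old_lt (σ : Equiv.Perm (Fin n)) (hfix : ∀ j : Fin n, 3 ≤ j.val → σ j = j)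
    (x : Fin n) (hx : x.val < 3) : (σ x).val < 3 := by
  by_contra h
  have h1 : σ (σ x) = σ x := hfix _ (not_lt.mp h)
  have h2 : σ x = x := σ.injective h1
  rw [h2] at h
  exact h hx

noncomputable def restrictPerm (hn : 3 ≤ n) (σ : Equiv.Perm (Fin n))
    (hfix : ∀ j : Fin n, 3 ≤ j.val → σ j = j) : Equiv.Perm (Fin 3) :=
  Equiv.ofBijective (fun z => ⟨(σ (Fin.castLE hn z)).val, sigma_old_lt σ hfix _ z.isLt⟩)
    (Finite.injective_iff_bijective.mp (by
      intro z w h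
      simp only [Fin.mk.injEq] at h
      have := σ.injective (Fin.ext h)
      exact Fin.castLE_injective hn this))

lemma restrictPerm_spec (hn : 3 ≤ n) (σ : Equiv.Perm (Fin n))
    (hfix : ∀ j : Fin n, 3 ≤ j.val → σ j = j) (z : Fin 3) :
    σ (Fin.castLE hn z) = Fin.castLE hn (restrictPerm hn σ hfix z) := Fin.ext rfl

noncomputable def liftPerm (hn : 3 ≤ n) (τ : Equiv.Perm (Fin 3)) : Equiv.Perm (Fin n) :=
  τ.viaFintypeEmbedding (Fin.castLEEmb hn)

lemma liftPerm_old (hn : 3 ≤ n) (τ : Equiv.Perm (Fin 3)) (z : Fin 3) :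
    liftPerm hn τ (Fin.castLE hn z) = Fin.castLE hn (τ z) :=
  Equiv.Perm.viaFintypeEmbedding_apply_image τ (Fin.castLEEmb hn) z

lemma liftPerm_new (hn : 3 ≤ n) (τ : Equiv.Perm (Fin 3)) {x : Fin n} (hx : 3 ≤ x.val) :
    liftPerm hn τ x = x := by
  apply Equiv.Perm.viaFintypeEmbedding_apply_notMem_range
  rintro ⟨z, rfl⟩
  have h1 := z.isLt
  simp only [Fin.castLEEmb_apply, Fin.coe_castLE] at hx
  omega

lemma expost_pad_facts (hn : 3 ≤ n) (R : Fin 3 → Fin 3 → Fin 3 → Prop) (hR : ∀ i, IsPref (R i))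
    (p : Fin n → Fin n → ℝ) (hEP : ExPostEfficient (padP R) p) :
    (∀ (i o : Fin n), i.val < 3 → 3 ≤ o.val → p i o = 0) ∧ (∀ i : Fin n, ∑ o, p i o = 1) := by
  obtain ⟨w, hw0, hw1, hwP, hval⟩ := hEP
  constructor
  · intro i o hi ho
    rw [hval]
    apply Finset.sum_eq_zero
    intro σ _
    by_cases hσ : w σ = 0
    · rw [hσ, zero_mul]
    · have hfix := pareto_fix_new hn R hR σ (hwP σ hσ)
      have hlt : (σ i).val < 3 := sigma_old_lt σ hfix i hi
      have : σ i ≠ o := fun h => by rw [h] at hlt; omega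
      simp [permMatrix, this]
  · intro i
    have h1 : ∀ o, p i o = ∑ σ, w σ * permMatrix σ i o := fun o => hval i o
    calc ∑ o, p i o = ∑ o, ∑ σ, w σ * permMatrix σ i o := Finset.sum_congr rfl (fun o _ => h1 o)
      _ = ∑ σ, ∑ o, w σ * permMatrix σ i o := Finset.sum_comm
      _ = ∑ σ, w σ := by
          apply Finset.sum_congr rfl
          intro σ _
          rw [← Finset.mul_sum]
          have : ∑ o, permMatrix σ i o = 1 := by
            simp [permMatrix, Finset.sum_ite_eq]
          rw [this, mul_one]
      _ = 1 := hw1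

lemma sdge_transfer (hn : 3 ≤ n) (R3 : Fin 3 → Fin 3 → Prop)
    (x y : Fin n → ℝ)
    (hx0 : ∀ o : Fin n, 3 ≤ o.val → x o = 0) (hy0 : ∀ o : Fin n, 3 ≤ o.val → y o = 0)
    (hxs : ∑ o, x o = 1) (hys : ∑ o, y o = 1) :
    SDge (Pold R3) x y ↔
      SDge R3 (fun z => x (Fin.castLE hn z)) (fun z => y (Fin.castLE hn z)) := by
  have hfeq : ∀ o : Fin 3,
      (univ.filter (fun z : Fin 3 => Pold (n := n) R3 (Fin.castLE hn z) (Fin.castLE hn o)))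
        = univ.filter (fun z => R3 z o) := by
    intro o
    apply Finset.filter_congr
    intro z _
    simp [pold_iff hn]
  constructor
  · intro h o
    have h2 := h (Fin.castLE hn o)
    rw [sum_filter_small hn x hx0, sum_filter_small hn y hy0, hfeq] at h2
    exact h2
  · intro h o
    by_cases ho : o.val < 3
    · have hco : Fin.castLE hn ⟨o.val, ho⟩ = o := Fin.ext rfl
      rw [← hco, sum_filter_small hn x hx0, sum_filter_small hn y hy0, hfeq]
      exact h ⟨o.val, ho⟩
    · have ho3 : 3 ≤ o.val := not_lt.mp ho
      have hx1 : ∑ o' ∈ univ.filter (fun o' => Pold (n := n) R3 o' o), x o' = 1 := by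
        rw [Finset.sum_filter, ← hxs]
        apply Finset.sum_congr rfl
        intro o' _
        by_cases h3 : o'.val < 3
        · rw [if_pos (pold_old_new R3 h3 ho3)]
        · rw [hx0 o' (not_lt.mp h3)]
          simp
      have hy1 : ∑ o' ∈ univ.filter (fun o' => Pold (n := n) R3 o' o), y o' = 1 := by
        rw [Finset.sum_filter, ← hys]
        apply Finset.sum_congr rfl
        intro o' _
        by_cases h3 : o'.val < 3
        · rw [if_pos (pold_old_new R3 h3 ho3)]
        · rw [hy0 o' (not_lt.mp h3)]
          simp
      rw [hx1, hy1]

lemma expost_restrict (hn : 3 ≤ n) (R : Fin 3 → Fin 3 → Fin 3 → Prop) (hR : ∀ i, IsPref (R i))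
    (p : Fin n → Fin n → ℝ) (hEP : ExPostEfficient (padP R) p) :
    ExPostEfficient R (fun i o => p (Fin.castLE hn i) (Fin.castLE hn o)) := by
  classical
  obtain ⟨w, hw0, hw1, hwP, hval⟩ := hEP
  have hfix : ∀ σ, w σ ≠ 0 → ∀ j : Fin n, 3 ≤ j.val → σ j = j :=
    fun σ h => pareto_fix_new hn R hR σ (hwP σ h)
  set Φ : Equiv.Perm (Fin n) → Equiv.Perm (Fin 3) → Prop :=
    fun σ τ => ∀ z : Fin 3, σ (Fin.castLE hn z) = Fin.castLE hn (τ z) with hΦdef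
  have huniq : ∀ σ (hσ : w σ ≠ 0) τ, Φ σ τ ↔ τ = restrictPerm hn σ (hfix σ hσ) := by
    intro σ hσ τ
    constructor
    · intro hφ
      apply Equiv.ext
      intro z
      apply Fin.castLE_injective hn
      rw [← hφ z, restrictPerm_spec hn σ (hfix σ hσ) z]
    · rintro rfl
      intro z
      exact restrictPerm_spec hn σ (hfix σ hσ) z
  refine ⟨fun τ => ∑ σ ∈ univ.filter (fun σ => Φ σ τ), w σ, ?_, ?_, ?_, ?_⟩
  · intro τ
    exact Finset.sum_nonneg (fun σ _ => hw0 σ)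
  · have h1 : ∀ τ : Equiv.Perm (Fin 3), ∑ σ ∈ univ.filter (fun σ => Φ σ τ), w σ
        = ∑ σ : Equiv.Perm (Fin n), if Φ σ τ then w σ else 0 :=
      fun τ => Finset.sum_filter _ _
    calc ∑ τ, ∑ σ ∈ univ.filter (fun σ => Φ σ τ), w σ
        = ∑ τ : Equiv.Perm (Fin 3), ∑ σ : Equiv.Perm (Fin n), if Φ σ τ then w σ else 0 :=
          Finset.sum_congr rfl (fun τ _ => h1 τ)
      _ = ∑ σ : Equiv.Perm (Fin n), ∑ τ : Equiv.Perm (Fin 3), if Φ σ τ then w σ else 0 :=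
          Finset.sum_comm
      _ = ∑ σ, w σ := by
          apply Finset.sum_congr rfl
          intro σ _
          by_cases hσ : w σ = 0
          · rw [hσ]
            simp
          · have h2 : ∀ τ, (if Φ σ τ then w σ else 0)
                = (if τ = restrictPerm hn σ (hfix σ hσ) then w σ else 0) := by
              intro τ
              rw [if_congr (huniq σ hσ τ) rfl rfl]
            rw [Finset.sum_congr rfl (fun τ _ => h2 τ), Finset.sum_ite_eq' univ _ (fun _ => w σ)]
            simp
      _ = 1 := hw1
  · intro τ hτ
    obtain ⟨σ, hσmem, hσ0⟩ := Finset.exists_ne_zero_of_sum_ne_zero hτ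
    have hφ : Φ σ τ := (Finset.mem_filter.mp hσmem).2
    have hpar := hwP σ hσ0
    rintro ⟨τ', hτ'w, i0, hτ's⟩
    apply hpar
    refine ⟨liftPerm hn τ', ?_, ⟨Fin.castLE hn i0, ?_⟩⟩
    · intro i
      by_cases hi : i.val < 3
      · have hie : Fin.castLE hn (⟨i.val, hi⟩ : Fin 3) = i := Fin.ext rfl
        rw [← hie, liftPerm_old, hφ, padP_old hn]
        rw [pold_iff hn]
        exact hτ'w _
      · have h3 : 3 ≤ i.val := not_lt.mp hi
        rw [liftPerm_new hn τ' h3, hfix σ hσ0 i h3]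
        exact prefRefl (isPref_padP R hR i) i
    · rw [liftPerm_old, hφ, padP_old hn, pold_iff hn]
      exact hτ's
  · intro i o
    beta_reduce
    rw [hval]
    have h1 : ∀ τ : Equiv.Perm (Fin 3), (∑ σ ∈ univ.filter (fun σ => Φ σ τ), w σ) * permMatrix τ i o
        = ∑ σ : Equiv.Perm (Fin n), if Φ σ τ then w σ * permMatrix τ i o else 0 := by
      intro τ
      rw [Finset.sum_mul, Finset.sum_filter]
    rw [Finset.sum_congr rfl (fun τ _ => h1 τ), Finset.sum_comm]
    apply Finset.sum_congr rfl
    intro σ _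
    by_cases hσ : w σ = 0
    · rw [hσ]
      simp
    · have h2 : ∀ τ, (if Φ σ τ then w σ * permMatrix τ i o else 0)
          = (if τ = restrictPerm hn σ (hfix σ hσ) then w σ * permMatrix τ i o else 0) := by
        intro τ
        rw [if_congr (huniq σ hσ τ) rfl rfl]
      rw [Finset.sum_congr rfl (fun τ _ => h2 τ),
        Finset.sum_ite_eq' univ _ (fun τ => w σ * permMatrix τ i o), if_pos (mem_univ _)]
      congr 1
      have hspec := restrictPerm_spec hn σ (hfix σ hσ) i
      unfold permMatrix
      by_cases hc : restrictPerm hn σ (hfix σ hσ) i = o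
      · rw [if_pos hc, if_pos (by rw [hspec, hc])]
      · rw [if_neg hc, if_neg (fun h => hc (Fin.castLE_injective hn (by rw [← hspec, h])))]

lemma sim_lemma (hn : 3 ≤ n) (R3 : Fin 3 → Fin 3 → Fin 3 → Prop)
    (hstrict3 : ∀ i, IsStrictPref (R3 i)) :
    ∀ (fuel3 fueln : ℕ), fuel3 ≤ fueln →
    ∀ (rem3 : Fin 3 → ℝ) (remn : Fin n → ℝ) (alloc3 : Fin 3 → Fin 3 → ℝ)
      (allocn : Fin n → Fin n → ℝ) (c : ℝ),
      (∀ o : Fin 3, remn (Fin.castLE hn o) = rem3 o) →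
      (∀ o : Fin n, 3 ≤ o.val → remn o = c) →
      (∀ o, 0 ≤ rem3 o) →
      ((∑ o, rem3 o) = 3 * c) →
      ((univ.filter fun o => 0 < rem3 o).card ≤ fuel3) →
      (∀ i o : Fin 3, allocn (Fin.castLE hn i) (Fin.castLE hn o) = alloc3 i o) →
      ∀ i o : Fin 3, PSaux (padP R3) fueln remn allocn (Fin.castLE hn i) (Fin.castLE hn o)
        = PSaux R3 fuel3 rem3 alloc3 i o := by
  intro fuel3
  induction fuel3 with
  | zero =>
    intro fueln _ rem3 remn alloc3 allocn c hrold hrnew hpos hsum hcard hal i o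
    have hA3 : ¬ (Aset rem3).Nonempty := by
      rw [Finset.nonempty_iff_ne_empty]
      intro h
      apply h
      rw [← Finset.card_eq_zero]
      exact Nat.le_zero.mp hcard
    have hz : ∀ o : Fin 3, rem3 o = 0 := by
      intro o
      by_contra h
      exact hA3 ⟨o, by simp [Aset, lt_of_le_of_ne (hpos o) (Ne.symm h)]⟩
    have hc : c = 0 := by
      have := hsum
      simp only [hz] at this
      simp at this
      linarith
    have hAn : ¬ (Aset remn).Nonempty := by
      rintro ⟨o, ho⟩
      simp only [Aset, mem_filter, mem_univ, true_and] at ho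
      by_cases h3 : o.val < 3
      · have : remn o = rem3 ⟨o.val, h3⟩ := hrold ⟨o.val, h3⟩
        rw [this, hz] at ho
        exact lt_irrefl 0 ho
      · rw [hrnew o (not_lt.mp h3), hc] at ho
        exact lt_irrefl 0 ho
    rw [PSaux_stall _ _ _ _ hAn]
    have h0 : PSaux R3 0 rem3 alloc3 = alloc3 := rfl
    rw [h0]
    exact hal i o
  | succ fuel3 ih =>
    intro fueln hfuel rem3 remn alloc3 allocn c hrold hrnew hpos hsum hcard hal i o
    obtain ⟨fueln', rfl⟩ : ∃ m, fueln = m + 1 := ⟨fueln - 1, by omega⟩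
    by_cases hA3 : (Aset rem3).Nonempty
    case neg =>
      have hz : ∀ o : Fin 3, rem3 o = 0 := by
        intro o
        by_contra h
        exact hA3 ⟨o, by simp [Aset, lt_of_le_of_ne (hpos o) (Ne.symm h)]⟩
      have hc : c = 0 := by
        have := hsum
        simp only [hz] at this
        simp at this
        linarith
      have hAn : ¬ (Aset remn).Nonempty := by
        rintro ⟨o', ho⟩
        simp only [Aset, mem_filter, mem_univ, true_and] at ho
        by_cases h3 : o'.val < 3
        · have : remn o' = rem3 ⟨o'.val, h3⟩ := hrold ⟨o'.val, h3⟩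
          rw [this, hz] at ho
          exact lt_irrefl 0 ho
        · rw [hrnew o' (not_lt.mp h3), hc] at ho
          exact lt_irrefl 0 ho
      rw [PSaux_stall _ _ _ _ hAn, PSaux_stall _ _ _ _ hA3]
      exact hal i o
    case pos =>
    -- c > 0
    have hc : 0 < c := by
      obtain ⟨oa, hoa⟩ := hA3
      simp only [Aset, mem_filter, mem_univ, true_and] at hoa
      by_contra h
      push_neg at h
      have h1 : ∑ o, rem3 o ≤ 0 := by
        rw [hsum]; linarith
      have h2 : 0 < ∑ o, rem3 o := by
        calc (0:ℝ) = ∑ _o : Fin 3, 0 := by simp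
        _ < ∑ o, rem3 o := by
            apply Finset.sum_lt_sum (fun o _ => hpos o) ⟨oa, mem_univ oa, hoa⟩
      linarith
    -- favorites
    have hfav3ex : ∀ i : Fin 3, ∃ o ∈ Aset rem3, ∀ o' ∈ Aset rem3, R3 i o o' :=
      fun i => exists_max (hstrict3 i).1 _ hA3
    set fav3 : Fin 3 → Fin 3 := fun i => (hfav3ex i).choose with hfav3def
    have hfav3mem : ∀ i, fav3 i ∈ Aset rem3 := fun i => (hfav3ex i).choose_spec.1
    have hfav3max : ∀ i, ∀ o' ∈ Aset rem3, R3 i (fav3 i) o' := fun i => (hfav3ex i).choose_spec.2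
    set favn : Fin n → Fin n :=
      fun i => if hi : i.val < 3 then Fin.castLE hn (fav3 ⟨i.val, hi⟩) else i with hfavndef
    -- membership in Aset remn
    have hAno : ∀ o : Fin 3, (Fin.castLE hn o ∈ Aset remn ↔ o ∈ Aset rem3) := by
      intro o
      simp only [Aset, mem_filter, mem_univ, true_and, hrold o]
    have hAnn : ∀ o : Fin n, 3 ≤ o.val → o ∈ Aset remn := by
      intro o ho
      simp only [Aset, mem_filter, mem_univ, true_and, hrnew o ho]
      exact hc
    have hAn : (Aset remn).Nonempty := by
      obtain ⟨oa, hoa⟩ := hA3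
      exact ⟨Fin.castLE hn oa, (hAno oa).mpr hoa⟩
    have hfavn_old : ∀ z : Fin 3, favn (Fin.castLE hn z) = Fin.castLE hn (fav3 z) := by
      intro z
      simp only [hfavndef]
      rw [dif_pos (show (Fin.castLE hn z).val < 3 from z.isLt)]
    have hfavn_new : ∀ o : Fin n, 3 ≤ o.val → favn o = o := by
      intro o ho
      simp only [hfavndef]
      rw [dif_neg (by omega)]
    have hfavnmem : ∀ i : Fin n, favn i ∈ Aset remn := by
      intro i
      by_cases hi : i.val < 3
      · have hie : Fin.castLE hn (⟨i.val, hi⟩ : Fin 3) = i := Fin.ext rfl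
        rw [← hie, hfavn_old]
        exact (hAno _).mpr (hfav3mem _)
      · rw [hfavn_new i (not_lt.mp hi)]
        exact hAnn i (not_lt.mp hi)
    have hfavnmax : ∀ i : Fin n, ∀ o' ∈ Aset remn, padP R3 i (favn i) o' := by
      intro i o' ho'
      by_cases hi : i.val < 3
      · have hie : Fin.castLE hn (⟨i.val, hi⟩ : Fin 3) = i := Fin.ext rfl
        rw [← hie, hfavn_old, padP_old hn]
        by_cases ho3 : o'.val < 3
        · have hoe : Fin.castLE hn (⟨o'.val, ho3⟩ : Fin 3) = o' := Fin.ext rfl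
          rw [← hoe, pold_iff hn]
          refine hfav3max _ _ ((hAno _).mp ?_)
          rw [hoe]
          exact ho' 
        · exact pold_old_new _ (fav3 _).isLt (not_lt.mp ho3)
      · rw [hfavn_new i (not_lt.mp hi), padP_new R3 (not_lt.mp hi)]
        exact pnew_top i o'
    -- eaters
    have hEat_old : ∀ o : Fin 3,
        eatersF favn (Fin.castLE hn o) = (eatersF fav3 o).map (Fin.castLEEmb hn) := by
      intro o
      unfold eatersF
      rw [filter_small hn (fun i => favn i = Fin.castLE hn o) (by
        intro x hx
        by_contra h3
        rw [hfavn_new x (not_lt.mp h3)] at hx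
        have : x.val = o.val := congrArg Fin.val hx
        have := o.isLt
        omega)]
      congr 1
      apply Finset.filter_congr
      intro z _
      rw [hfavn_old z]
      constructor
      · intro h
        exact Fin.castLE_injective hn h
      · intro h
        exact congrArg (Fin.castLE hn) h
    have hEat_new : ∀ o : Fin n, 3 ≤ o.val → eatersF favn o = {o} := by
      intro o ho
      unfold eatersF
      ext x
      simp only [mem_filter, mem_univ, true_and, Finset.mem_singleton]
      constructor
      · intro h
        by_cases hx : x.val < 3
        · have hxe : Fin.castLE hn (⟨x.val, hx⟩ : Fin 3) = x := Fin.ext rfl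
          rw [← hxe, hfavn_old] at h
          have : (fav3 ⟨x.val, hx⟩).val = o.val := congrArg Fin.val h
          have := (fav3 ⟨x.val, hx⟩).isLt
          omega
        · rw [hfavn_new x (not_lt.mp hx)] at h
          exact h
      · rintro rfl
        exact hfavn_new x ho
    -- E sets
    have hE3 : (Eset rem3 fav3).Nonempty := by
      refine ⟨fav3 0, ?_⟩
      unfold Eset
      rw [mem_filter]
      exact ⟨hfav3mem 0, ⟨0, by simp [eatersF]⟩⟩
    have hEmem_new : ∀ o : Fin n, 3 ≤ o.val → o ∈ Eset remn favn := by
      intro o ho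
      unfold Eset
      rw [mem_filter]
      exact ⟨hAnn o ho, by rw [hEat_new o ho]; exact ⟨o, Finset.mem_singleton_self o⟩⟩
    have hEmem_old : ∀ o : Fin 3, (Fin.castLE hn o ∈ Eset remn favn ↔ o ∈ Eset rem3 fav3) := by
      intro o
      unfold Eset
      rw [mem_filter, mem_filter, hAno o, hEat_old o]
      constructor
      · rintro ⟨h1, x, hx⟩
        rw [Finset.mem_map] at hx
        obtain ⟨z, hz, _⟩ := hx
        exact ⟨h1, z, hz⟩
      · rintro ⟨h1, x, hx⟩
        exact ⟨h1, Fin.castLEEmb hn x, Finset.mem_map_of_mem _ hx⟩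
    have hEn : (Eset remn favn).Nonempty := by
      obtain ⟨o, ho⟩ := hE3
      exact ⟨Fin.castLE hn o, (hEmem_old o).mpr ho⟩
    -- cards
    have hcard_old : ∀ o : Fin 3,
        (eatersF favn (Fin.castLE hn o)).card = (eatersF fav3 o).card := by
      intro o
      rw [hEat_old o, Finset.card_map]
    -- t3 properties
    have h3pos : ∀ o ∈ Eset rem3 fav3, 0 < ((eatersF fav3 o).card : ℝ) := by
      intro o ho
      have : (eatersF fav3 o).Nonempty := (mem_filter.mp ho).2
      exact_mod_cast Finset.card_pos.mpr this
    have ht3le : ∀ o ∈ Eset rem3 fav3,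
        tVal rem3 fav3 hE3 ≤ rem3 o / (eatersF fav3 o).card := by
      intro o ho
      exact tVal_le rem3 fav3 hE3 ho
    have ht3mul : ∀ o ∈ Eset rem3 fav3,
        tVal rem3 fav3 hE3 * (eatersF fav3 o).card ≤ rem3 o := by
      intro o ho
      rw [← le_div_iff₀ (h3pos o ho)]
      exact ht3le o ho
    have ht3nonneg : 0 ≤ tVal rem3 fav3 hE3 := by
      obtain ⟨o, ho, hvo⟩ := tVal_mem rem3 fav3 hE3
      rw [← hvo]
      apply div_nonneg (hpos o) (le_of_lt (h3pos o ho))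
    -- partition: sum of eater cards over E3 = 3
    have hpart : ∑ o ∈ Eset rem3 fav3, (eatersF fav3 o).card = 3 := by
      have hbu : (Eset rem3 fav3).biUnion (eatersF fav3) = univ := by
        apply Finset.eq_univ_of_forall
        intro x
        rw [Finset.mem_biUnion]
        refine ⟨fav3 x, ?_, by simp [eatersF]⟩
        unfold Eset
        rw [mem_filter]
        exact ⟨hfav3mem x, ⟨x, by simp [eatersF]⟩⟩
      have hdisj : ∀ o1 ∈ Eset rem3 fav3, ∀ o2 ∈ Eset rem3 fav3, o1 ≠ o2 →
          Disjoint (eatersF fav3 o1) (eatersF fav3 o2) := by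
        intro o1 _ o2 _ hne
        rw [Finset.disjoint_left]
        intro x hx1 hx2
        simp only [eatersF, mem_filter, mem_univ, true_and] at hx1 hx2
        exact hne (hx1 ▸ hx2 ▸ rfl)
      have := Finset.card_biUnion hdisj
      rw [hbu] at this
      rw [← this]
      rfl
    have ht3c : tVal rem3 fav3 hE3 ≤ c := by
      have h1 : tVal rem3 fav3 hE3 * 3 ≤ ∑ o ∈ Eset rem3 fav3, rem3 o := by
        calc tVal rem3 fav3 hE3 * 3
            = ∑ o ∈ Eset rem3 fav3, tVal rem3 fav3 hE3 * (eatersF fav3 o).card := by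
              rw [← Finset.mul_sum]
              congr 1
              rw [← Nat.cast_sum, hpart]
              norm_num
          _ ≤ ∑ o ∈ Eset rem3 fav3, rem3 o := Finset.sum_le_sum ht3mul
      have h2 : ∑ o ∈ Eset rem3 fav3, rem3 o ≤ ∑ o, rem3 o := by
        apply Finset.sum_le_sum_of_subset_of_nonneg (Finset.subset_univ _)
        intro o _ _
        exact hpos o
      rw [hsum] at h2
      linarith
    -- tn = t3
    have htn : tVal remn favn hEn = tVal rem3 fav3 hE3 := by
      apply le_antisymm
      · obtain ⟨o, ho, hvo⟩ := tVal_mem rem3 fav3 hE3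
        have hmem : remn (Fin.castLE hn o) / ((eatersF favn (Fin.castLE hn o)).card : ℝ)
            ∈ (Eset remn favn).image (fun o => remn o / ((eatersF favn o).card : ℝ)) :=
          Finset.mem_image_of_mem _ ((hEmem_old o).mpr ho)
        have heq : remn (Fin.castLE hn o) / ((eatersF favn (Fin.castLE hn o)).card : ℝ)
            = tVal rem3 fav3 hE3 := by
          rw [hrold o, hcard_old o]
          exact hvo
        rw [← heq]
        exact Finset.min'_le _ _ hmem
      · obtain ⟨o, ho, hvo⟩ := tVal_mem remn favn hEn
        rw [← hvo]
        by_cases h3 : o.val < 3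
        · have hoe : Fin.castLE hn (⟨o.val, h3⟩ : Fin 3) = o := Fin.ext rfl
          rw [← hoe, hrold, hcard_old]
          apply ht3le
          refine (hEmem_old _).mp ?_
          rw [hoe]
          exact ho
        · rw [hrnew o (not_lt.mp h3), hEat_new o (not_lt.mp h3)]
          simp only [Finset.card_singleton, Nat.cast_one, div_one]
          exact ht3c
    -- step both runs
    rw [PSaux_succ_eq R3 hstrict3 fuel3 rem3 alloc3 hA3 fav3 hfav3mem hfav3max hE3,
      PSaux_succ_eq (padP R3) (isStrictPref_padP R3 hstrict3) fueln' remn allocn hAn favn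
        hfavnmem hfavnmax hEn]
    -- apply IH
    set t3 := tVal rem3 fav3 hE3 with ht3def
    apply ih fueln' (by omega) _ _ _ _ (c - t3)
    · -- old rem match
      intro o'
      rw [htn]
      by_cases hoE : o' ∈ Eset rem3 fav3
      · rw [if_pos ((hEmem_old o').mpr hoE), if_pos hoE, hrold o', hcard_old o']
      · rw [if_neg (fun h => hoE ((hEmem_old o').mp h)), if_neg hoE, hrold o']
    · -- new rem = c - t3
      intro o' ho'
      rw [htn, if_pos (hEmem_new o' ho'), hrnew o' ho', hEat_new o' ho']
      simp only [Finset.card_singleton, Nat.cast_one, mul_one]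
    · -- nonneg
      intro o'
      by_cases hoE : o' ∈ Eset rem3 fav3
      · rw [if_pos hoE]
        have := ht3mul o' hoE
        linarith
      · rw [if_neg hoE]
        exact hpos o'
    · -- sum
      have hsplit : ∀ o' : Fin 3,
          (if o' ∈ Eset rem3 fav3 then rem3 o' - t3 * (eatersF fav3 o').card else rem3 o')
          = rem3 o' - (if o' ∈ Eset rem3 fav3 then t3 * (eatersF fav3 o').card else 0) := by
        intro o'
        split <;> ring
      rw [Finset.sum_congr rfl (fun o' _ => hsplit o'), Finset.sum_sub_distrib]
      rw [Finset.sum_ite_mem, Finset.univ_inter, ← Finset.mul_sum, ← Nat.cast_sum, hpart, hsum]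
      push_cast
      ring
    · -- fuel
      obtain ⟨ostar, hostar, hvostar⟩ := tVal_mem rem3 fav3 hE3
      have hzero : (if ostar ∈ Eset rem3 fav3 then rem3 ostar - t3 * (eatersF fav3 ostar).card
          else rem3 ostar) = 0 := by
        rw [if_pos hostar]
        have hcpos := h3pos ostar hostar
        have : t3 = rem3 ostar / (eatersF fav3 ostar).card := hvostar.symm
        rw [this, div_mul_cancel₀ _ (ne_of_gt hcpos)]
        ring
      have hsubset : univ.filter (fun o' => 0 < (if o' ∈ Eset rem3 fav3
            then rem3 o' - t3 * (eatersF fav3 o').card else rem3 o'))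
          ⊆ (univ.filter fun o' => 0 < rem3 o').erase ostar := by
        intro o' ho'
        rw [mem_filter] at ho'
        rw [Finset.mem_erase, mem_filter]
        constructor
        · intro h
          rw [h] at ho'
          rw [hzero] at ho'
          exact lt_irrefl 0 ho'.2
        · refine ⟨mem_univ _, ?_⟩
          rcases ho' with ⟨_, hlt⟩
          by_cases hoE : o' ∈ Eset rem3 fav3
          · rw [if_pos hoE] at hlt
            have h1 : 0 ≤ t3 * (eatersF fav3 o').card :=
              mul_nonneg ht3nonneg (Nat.cast_nonneg _)
            linarith
          · rw [if_neg hoE] at hlt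
            exact hlt
      calc (univ.filter (fun o' => 0 < (if o' ∈ Eset rem3 fav3
            then rem3 o' - t3 * (eatersF fav3 o').card else rem3 o'))).card
          ≤ ((univ.filter fun o' => 0 < rem3 o').erase ostar).card := Finset.card_le_card hsubset
        _ ≤ (univ.filter fun o' => 0 < rem3 o').card - 1 := by
            apply Nat.le_of_eq
            apply Finset.card_erase_of_mem
            rw [mem_filter]
            refine ⟨mem_univ _, ?_⟩
            have := (mem_filter.mp ((mem_filter.mp hostar).1)).2
            exact this
        _ ≤ fuel3 := by omega
    · -- alloc
      intro i' o'
      rw [htn, hal i' o', hfavn_old i']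
      congr 1
      by_cases h : fav3 i' = o'
      · rw [if_pos h, if_pos (congrArg (Fin.castLE hn) h)]
      · rw [if_neg h, if_neg (fun hh => h (Fin.castLE_injective hn hh))]

end stmt17aux

/-- If the impossibility holds for `n = 3`, it holds for every `n > 3`. -/
theorem stmt17
    (h3 : ¬ ∃ f : (Fin 3 → Fin 3 → Fin 3 → Prop) → Fin 3 → Fin 3 → ℝ,
      ExtendsPS f ∧ ExPostEfficientRule f ∧ WeakSDStrategyproof f) :
    ∀ n : ℕ, 3 < n →
      ¬ ∃ f : (Fin n → Fin n → Fin n → Prop) → Fin n → Fin n → ℝ,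
        ExtendsPS f ∧ ExPostEfficientRule f ∧ WeakSDStrategyproof f := by
  intro n hn3
  rintro ⟨f, hext, hEPR, hSP⟩
  have hn : 3 ≤ n := le_of_lt hn3
  apply h3
  refine ⟨fun R i o => f (padP R) (Fin.castLE hn i) (Fin.castLE hn o), ?_, ?_, ?_⟩
  · -- ExtendsPS
    intro R hR
    have hstrictpad : ∀ i, IsStrictPref (padP (n := n) R i) := isStrictPref_padP R hR
    funext i o
    show f (padP R) (Fin.castLE hn i) (Fin.castLE hn o) = PS R i o
    rw [hext _ hstrictpad]
    show PSaux (padP R) n (fun _ => 1) (fun _ _ => 0) (Fin.castLE hn i) (Fin.castLE hn o)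
      = PSaux R 3 (fun _ => 1) (fun _ _ => 0) i o
    apply sim_lemma hn R hR 3 n hn (fun _ => 1) (fun _ => 1) (fun _ _ => 0) (fun _ _ => 0) 1
      (fun _ => rfl) (fun _ _ => rfl) (fun _ => zero_le_one)
      (by norm_num)
      (by
        have : (univ.filter fun o : Fin 3 => (0:ℝ) < 1) = univ :=
          Finset.filter_true_of_mem (fun _ _ => zero_lt_one)
        rw [this]
        simp)
      (fun _ _ => rfl)
  · -- ExPostEfficientRule
    intro R hR
    exact expost_restrict hn R hR _ (hEPR _ (isPref_padP R hR))
  · -- WeakSDStrategyproof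
    intro R hR i R' hR' hcon
    have hpadpref : ∀ k, IsPref (padP (n := n) R k) := isPref_padP R hR
    have hupd3 : ∀ j, IsPref (Function.update R i R' j) := by
      intro j
      by_cases hj : j = i
      · rw [hj, Function.update_self]
        exact hR'
      · rw [Function.update_of_ne hj]
        exact hR j
    have hupd : padP (Function.update R i R')
        = Function.update (padP (n := n) R) (Fin.castLE hn i) (Pold R') := by
      funext k
      by_cases hk : k = Fin.castLE hn i
      · rw [hk, Function.update_self]
        have hi3 : (Fin.castLE hn i).val < 3 := i.isLt
        rw [padP_old' _ hi3]
        have : (⟨(Fin.castLE hn i).val, hi3⟩ : Fin 3) = i := Fin.ext rfl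
        rw [this, Function.update_self]
      · rw [Function.update_of_ne hk]
        by_cases h3 : k.val < 3
        · rw [padP_old' _ h3, padP_old' R h3]
          have hne : (⟨k.val, h3⟩ : Fin 3) ≠ i := by
            intro hh
            apply hk
            have hvv := congrArg Fin.val hh
            exact Fin.ext hvv
          rw [Function.update_of_ne hne]
        · rw [padP_new _ (not_lt.mp h3), padP_new _ (not_lt.mp h3)]
    have hpfacts := expost_pad_facts hn R hR _ (hEPR _ hpadpref)
    have hqfacts := expost_pad_facts hn (Function.update R i R') hupd3 _
      (hEPR _ (isPref_padP _ hupd3))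
    set x : Fin n → ℝ := f (padP (Function.update R i R')) (Fin.castLE hn i) with hxdef
    set y : Fin n → ℝ := f (padP R) (Fin.castLE hn i) with hydef
    have hx0 : ∀ o : Fin n, 3 ≤ o.val → x o = 0 :=
      fun o ho => hqfacts.1 (Fin.castLE hn i) o i.isLt ho
    have hy0 : ∀ o : Fin n, 3 ≤ o.val → y o = 0 :=
      fun o ho => hpfacts.1 (Fin.castLE hn i) o i.isLt ho
    have hxs : ∑ o, x o = 1 := hqfacts.2 (Fin.castLE hn i)
    have hys : ∑ o, y o = 1 := hpfacts.2 (Fin.castLE hn i)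
    have hiff := sdge_transfer hn (R i) x y hx0 hy0 hxs hys
    have hiff2 := sdge_transfer hn (R i) y x hy0 hx0 hys hxs
    apply hSP (padP R) hpadpref (Fin.castLE hn i) (Pold R') (isPref_pold _ hR')
    rw [← hupd]
    have hpado : padP (n := n) R (Fin.castLE hn i) = Pold (R i) := padP_old hn R i
    rw [hpado]
    refine ⟨hiff.mpr hcon.1, fun hc2 => hcon.2 (hiff2.mp hc2)⟩
end

section
/- In a random assignment p that admits a trading cycle, executing an appropriate transfer of a sufficiently small probability mass ε > 0 along a trading cycle with distinct agents and distinct objects yields a valid random assignment q with q(i) ≿_i^SD p(i) for all i and q(i) ≻_i^SD p(i) for the improving agent; hence any assignment admitting such a trading cycle is not SD-efficient. -/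
open Finset
open scoped Classical

/-- Transferring a small probability mass `ε` along a trading cycle with
distinct agents and distinct objects yields a random assignment that SD-dominates `p`,
strictly for the improving agent; hence `p` is not SD-efficient. -/
theorem stmt18 {n k : ℕ} (R : Fin n → Fin n → Fin n → Prop) (hR : ∀ a, IsPref (R a))
    (p : Fin n → Fin n → ℝ) (hp : IsRandomAssignment p)
    (i : Fin k → Fin n) (o : Fin k → Fin n)
    (hi : Function.Injective i) (ho : Function.Injective o)
    (hc : IsTradingCycle R p i o) :
    (∃ ε : ℝ, 0 < ε ∧
      (fun q : Fin n → Fin n → ℝ =>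
        IsRandomAssignment q ∧ (∀ a, SDge (R a) (q a) (p a)) ∧
          ∃ a, SDgt (R a) (q a) (p a))
      (fun a x => p a x +
        ε * ((if ∃ j, i j = a ∧ o (finRotate k j) = x then (1:ℝ) else 0)
           - (if ∃ j, i j = a ∧ o j = x then (1:ℝ) else 0)))) ∧
    ¬ SDEfficient R p := by
  classical
  obtain ⟨hk, hpos, hweak, j1, hstr⟩ := hc
  obtain ⟨hpge, hprow, hpcol⟩ := hp
  have hne : (univ : Finset (Fin k)).Nonempty := ⟨⟨0, hk⟩, mem_univ _⟩
  set ε := univ.inf' hne (fun j => p (i j) (o j)) with hεdef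
  have hε0 : 0 < ε := (Finset.lt_inf'_iff hne).2 fun j _ => hpos j
  have hεle : ∀ j, ε ≤ p (i j) (o j) := fun j => Finset.inf'_le _ (mem_univ j)
  set F : Fin n → Fin n → ℝ :=
    fun a x => if ∃ j, i j = a ∧ o (finRotate k j) = x then (1:ℝ) else 0 with hF
  set G : Fin n → Fin n → ℝ :=
    fun a x => if ∃ j, i j = a ∧ o j = x then (1:ℝ) else 0 with hG
  set q : Fin n → Fin n → ℝ := fun a x => p a x + ε * (F a x - G a x) with hqdef
  have hF0 : ∀ a x, 0 ≤ F a x := by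
    intro a x; simp only [hF]; split <;> norm_num
  have hFa : ∀ (j0 : Fin k) (x), F (i j0) x = if o (finRotate k j0) = x then 1 else 0 := by
    intro j0 x
    simp only [hF]
    congr 1
    apply propext
    constructor
    · rintro ⟨j, hj1, hj2⟩; rwa [hi hj1] at hj2
    · intro h; exact ⟨j0, rfl, h⟩
  have hGa : ∀ (j0 : Fin k) (x), G (i j0) x = if o j0 = x then 1 else 0 := by
    intro j0 x
    simp only [hG]
    congr 1
    apply propext
    constructor
    · rintro ⟨j, hj1, hj2⟩; rwa [hi hj1] at hj2
    · intro h; exact ⟨j0, rfl, h⟩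
  have hFn : ∀ a, (∀ j, i j ≠ a) → ∀ x, F a x = 0 := by
    intro a ha x; simp only [hF]
    exact if_neg (by rintro ⟨j, hj1, _⟩; exact ha j hj1)
  have hGn : ∀ a, (∀ j, i j ≠ a) → ∀ x, G a x = 0 := by
    intro a ha x; simp only [hG]
    exact if_neg (by rintro ⟨j, hj1, _⟩; exact ha j hj1)
  -- filtered sums for an agent in the cycle
  have hFS : ∀ (j0 : Fin k) (S : Finset (Fin n)),
      ∑ x ∈ S, F (i j0) x = if o (finRotate k j0) ∈ S then 1 else 0 := by
    intro j0 S
    simp only [hFa]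
    exact Finset.sum_ite_eq S (o (finRotate k j0)) (fun _ => (1:ℝ))
  have hGS : ∀ (j0 : Fin k) (S : Finset (Fin n)),
      ∑ x ∈ S, G (i j0) x = if o j0 ∈ S then 1 else 0 := by
    intro j0 S
    simp only [hGa]
    exact Finset.sum_ite_eq S (o j0) (fun _ => (1:ℝ))
  have hqsum : ∀ a (S : Finset (Fin n)),
      ∑ x ∈ S, q a x = (∑ x ∈ S, p a x) + ε * ((∑ x ∈ S, F a x) - ∑ x ∈ S, G a x) := by
    intro a S
    simp only [hqdef, Finset.sum_add_distrib, Finset.mul_sum, mul_sub,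
      Finset.sum_sub_distrib]
  -- q is a random assignment
  have hq1 : ∀ a x, 0 ≤ q a x := by
    intro a x
    simp only [hqdef]
    by_cases hg : ∃ j, i j = a ∧ o j = x
    · obtain ⟨j, hj1, hj2⟩ := hg
      have hG1 : G a x = 1 := by simp only [hG]; exact if_pos ⟨j, hj1, hj2⟩
      have hle : ε ≤ p a x := by rw [← hj1, ← hj2]; exact hεle j
      have := hF0 a x
      nlinarith [mul_nonneg hε0.le (hF0 a x)]
    · have hG1 : G a x = 0 := by simp only [hG]; exact if_neg hg
      have := hpge a x
      nlinarith [mul_nonneg hε0.le (hF0 a x)]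
  have hsum_eq : ∀ a, (∑ x, F a x) = ∑ x, G a x := by
    intro a
    by_cases ha : ∃ j0, i j0 = a
    · obtain ⟨j0, rfl⟩ := ha
      rw [hFS j0 univ, hGS j0 univ]
      simp
    · push_neg at ha
      simp [hFn a ha, hGn a ha]
  have hq2 : ∀ a, ∑ x, q a x = 1 := by
    intro a
    rw [hqsum a univ, hsum_eq a, hprow a]
    ring
  have hcolF : ∀ x, (∑ a, F a x) = ∑ a, G a x := by
    intro x
    by_cases hx : ∃ j, o j = x
    · obtain ⟨jx, hjx⟩ := hx
      have h1 : ∀ a, F a x = if i ((finRotate k).symm jx) = a then 1 else 0 := by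
        intro a
        simp only [hF]
        congr 1
        apply propext
        constructor
        · rintro ⟨j, hj1, hj2⟩
          have hjj : finRotate k j = jx := ho (hj2.trans hjx.symm)
          rw [← hj1, ← hjj, Equiv.symm_apply_apply]
        · rintro h
          exact ⟨(finRotate k).symm jx, h, by rw [Equiv.apply_symm_apply]; exact hjx⟩
      have h2 : ∀ a, G a x = if i jx = a then 1 else 0 := by
        intro a
        simp only [hG]
        congr 1
        apply propext
        constructor
        · rintro ⟨j, hj1, hj2⟩
          rw [← hj1]; congr 1; exact ho (hjx.trans hj2.symm)
        · rintro h
          exact ⟨jx, h, hjx⟩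
      simp [h1, h2, Finset.sum_ite_eq]
    · have h1 : ∀ a, F a x = 0 := by
        intro a; simp only [hF]
        exact if_neg (by rintro ⟨j, _, hj2⟩; exact hx ⟨finRotate k j, hj2⟩)
      have h2 : ∀ a, G a x = 0 := by
        intro a; simp only [hG]
        exact if_neg (by rintro ⟨j, _, hj2⟩; exact hx ⟨j, hj2⟩)
      simp [h1, h2]
  have hq3 : ∀ x, ∑ a, q a x = 1 := by
    intro x
    have : ∑ a, q a x = (∑ a, p a x) + ε * ((∑ a, F a x) - ∑ a, G a x) := by
      simp only [hqdef, Finset.sum_add_distrib, Finset.mul_sum, mul_sub,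
        Finset.sum_sub_distrib]
    rw [this, hcolF x, hpcol x]
    ring
  -- SD dominance for every agent
  have hsd : ∀ a, SDge (R a) (q a) (p a) := by
    intro a t
    rw [hqsum a]
    by_cases ha : ∃ j0, i j0 = a
    · obtain ⟨j0, rfl⟩ := ha
      rw [hFS, hGS]
      split_ifs with h1 h2 h2
      · linarith
      · linarith
      · exfalso
        apply h1
        rw [Finset.mem_filter] at h2 ⊢
        exact ⟨mem_univ _, (hR (i j0)).2 (hweak j0) h2.2⟩
      · linarith
    · push_neg at ha
      simp [hFn a ha, hGn a ha]
  -- strict improvement for agent i j1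
  have hstrict : SDgt (R (i j1)) (q (i j1)) (p (i j1)) := by
    refine ⟨hsd (i j1), ?_⟩
    intro hcon
    have h := hcon (o (finRotate k j1))
    rw [hqsum (i j1), hFS, hGS] at h
    have hrefl : ∀ x, R (i j1) x x := fun x => ((hR (i j1)).1 x x).elim id id
    have hin : o (finRotate k j1) ∈
        univ.filter (fun o' => R (i j1) o' (o (finRotate k j1))) := by
      rw [Finset.mem_filter]; exact ⟨mem_univ _, hrefl _⟩
    have hout : o j1 ∉ univ.filter (fun o' => R (i j1) o' (o (finRotate k j1))) := by
      rw [Finset.mem_filter]; rintro ⟨_, h⟩; exact hstr h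
    rw [if_pos hin, if_neg hout] at h
    linarith
  have hmain : IsRandomAssignment q ∧ (∀ a, SDge (R a) (q a) (p a)) ∧
      ∃ a, SDgt (R a) (q a) (p a) := ⟨⟨hq1, hq2, hq3⟩, hsd, ⟨i j1, hstrict⟩⟩
  exact ⟨⟨ε, hε0, hmain⟩, not_not.2 ⟨q, hmain⟩⟩
end
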